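/- (Rayleigh mixture of Hüsler–Reiss distributions.) For every σ > 0 and all x, y ∈ ℝ, with η = √(1 + 1/σ²), ∫_0^∞ [Φ(λ + (y−x)/(2λ)) e^{−x} + Φ(λ + (x−y)/(2λ)) e^{−y}] · (λ/σ²) e^{−λ²/(2σ²)} dλ = e^{−min(x,y)} + (1/η) · e^{−(x+y)/2} · e^{−|y−x|·η/2}. -/

import Mathlib

open MeasureTheory Filter Real Set

/-- Standard normal density. -/
noncomputable def stdPdf (t : ℝ) : ℝ := (Real.sqrt (2 * Real.pi))⁻¹ * Real.exp (-(t ^ 2) / 2)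

/-- Standard normal CDF. -/
noncomputable def stdCdf (x : ℝ) : ℝ := ∫ t in Set.Iic x, stdPdf t

/-!
Write `V_λ(x, y)` for the bracket in the integrand. The Rayleigh density is the
`λ`-derivative of `-exp (-λ² / (2σ²))`, so integrating by parts turns the integral into the
boundary value `V_{0+}(x, y) = e^{-min(x, y)}` plus
`∫₀^∞ ∂_λ V_λ(x, y) · exp (-λ² / (2σ²)) dλ`.
Because `e^{-x} φ(λ + (y - x)/(2λ)) = e^{-y} φ(λ + (x - y)/(2λ))`, the derivative `∂_λ V_λ`
is a Gaussian in `λ` and `1/λ`, and the remaining integral is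
`∫₀^∞ exp (-(η² λ² + a² / λ²) / 2) dλ = √(2π) / (2η) · e^{-η a}` with `a = |y - x| / 2`,
which the Cauchy–Schlömilch substitution `u = η λ - a / λ` reduces to the Gaussian integral.
-/

open Topology ProbabilityTheory

theorem integral_Ioi_of_even {f : ℝ → ℝ} (heven : ∀ u, f (-u) = f u) :
    ∫ u in Ioi 0, f u = (∫ u, f u) / 2 := by
  have habs : ∀ u, f |u| = f u := fun u => by
    rcases abs_choice u with h | h <;> rw [h]; exact heven u
  calc ∫ u in Ioi 0, f u = (∫ u, f |u|) / 2 := by rw [integral_comp_abs]; ring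
    _ = (∫ u, f u) / 2 := by simp_rw [habs]

theorem integral_Ioi_comp_div_mul_div_sq (g : ℝ → ℝ) {c : ℝ} (hc : 0 < c) :
    ∫ l in Ioi 0, g (c / l) * (c / l ^ 2) = ∫ l in Ioi 0, g l := by
  have himage : (fun l => c / l) '' Ioi 0 = Ioi 0 := by
    refine (image_subset_iff.2 fun l hl => div_pos hc hl).antisymm fun l hl => ?_
    exact ⟨c / l, div_pos hc hl, div_div_cancel₀ hc.ne'⟩
  have hinj : InjOn (fun l => c / l) (Ioi 0) := fun u _ v _ h =>
    inv_injective (mul_left_cancel₀ hc.ne' h)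
  have hderiv : ∀ l ∈ Ioi (0 : ℝ),
      HasDerivWithinAt (fun l => c / l) (-(c / l ^ 2)) (Ioi 0) l := fun l hl => by
    simpa only [div_eq_mul_inv, mul_neg] using
      ((hasDerivAt_inv (ne_of_gt hl)).const_mul c).hasDerivWithinAt
  have h := integral_image_eq_integral_abs_deriv_smul measurableSet_Ioi hderiv hinj g
  rw [himage] at h
  rw [h]
  refine setIntegral_congr_fun measurableSet_Ioi fun l (hl : 0 < l) => ?_
  rw [abs_neg, abs_of_pos (by positivity), smul_eq_mul, mul_comm]

section CauchySchlomilch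

variable {p a : ℝ}

theorem strictMonoOn_mul_sub_div (hp : 0 < p) (ha : 0 ≤ a) :
    StrictMonoOn (fun l => p * l - a / l) (Ioi 0) := fun u hu v _ huv => by
  linarith [mul_lt_mul_of_pos_left huv hp, div_le_div_of_nonneg_left ha hu huv.le]

theorem image_mul_sub_div_Ioi (hp : 0 < p) (ha : 0 < a) :
    (fun l => p * l - a / l) '' Ioi 0 = univ := by
  refine eq_univ_of_forall fun u => ?_
  set s := √(u ^ 2 + 4 * p * a)
  have hs : s ^ 2 = u ^ 2 + 4 * p * a := sq_sqrt (by positivity)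
  have hus : |u| < s := by
    rw [← sqrt_sq_eq_abs]; exact sqrt_lt_sqrt (sq_nonneg u) (by nlinarith)
  set l := (u + s) / (2 * p)
  have hl : 0 < l := div_pos (by linarith [neg_abs_le u]) (by positivity)
  have hroot : p * l ^ 2 - u * l - a = 0 := by
    simp only [l]; field_simp; linear_combination hs
  refine ⟨l, hl, ?_⟩
  field_simp
  linear_combination hroot

theorem hasDerivAt_mul_sub_div {l : ℝ} (hl : l ≠ 0) :
    HasDerivAt (fun l => p * l - a / l) (p + a / l ^ 2) l := by
  have h := ((hasDerivAt_id l).const_mul p).fun_sub ((hasDerivAt_inv hl).const_mul a)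
  simpa only [id, mul_one, mul_neg, sub_neg_eq_add, ← div_eq_mul_inv] using h

theorem integral_Ioi_comp_mul_sub_div {f : ℝ → ℝ} (hf : Integrable f)
    (heven : ∀ u, f (-u) = f u) (hp : 0 < p) (ha : 0 ≤ a) :
    ∫ l in Ioi 0, f (p * l - a / l) = (∫ u, f u) / (2 * p) := by
  rcases ha.eq_or_lt with rfl | ha
  · simp_rw [zero_div, sub_zero]
    rw [integral_comp_mul_left_Ioi f 0 hp, mul_zero, integral_Ioi_of_even heven, smul_eq_mul]
    field_simp
  set F := fun l => f (p * l - a / l)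
  have hderiv : ∀ l ∈ Ioi (0 : ℝ),
      HasDerivWithinAt (fun l => p * l - a / l) (p + a / l ^ 2) (Ioi 0) l :=
    fun l hl => (hasDerivAt_mul_sub_div (ne_of_gt hl)).hasDerivWithinAt
  have hinj := (strictMonoOn_mul_sub_div hp ha.le).injOn
  have hjac : ∫ u, f u = ∫ l in Ioi 0, (p + a / l ^ 2) * F l := by
    rw [← setIntegral_univ, ← image_mul_sub_div_Ioi hp ha,
      integral_image_eq_integral_abs_deriv_smul measurableSet_Ioi hderiv hinj]
    refine setIntegral_congr_fun measurableSet_Ioi fun l (hl : 0 < l) => ?_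
    rw [abs_of_pos (by positivity), smul_eq_mul]
  have hjacInt : IntegrableOn (fun l => (p + a / l ^ 2) * F l) (Ioi 0) := by
    have h := (integrableOn_image_iff_integrableOn_abs_deriv_smul measurableSet_Ioi hderiv
      hinj f).1
    rw [image_mul_sub_div_Ioi hp ha] at h
    refine (h hf.integrableOn).congr_fun (fun l (hl : 0 < l) => ?_) measurableSet_Ioi
    dsimp only
    rw [abs_of_pos (by positivity), smul_eq_mul]
  -- the involution `l ↦ a / (p l)` reverses the sign of `p l - a / l`
  have hinv : ∫ l in Ioi 0, a / l ^ 2 * F l = p * ∫ l in Ioi 0, F l := by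
    rw [← integral_Ioi_comp_div_mul_div_sq F (div_pos ha hp), ← integral_const_mul]
    refine setIntegral_congr_fun measurableSet_Ioi fun l (hl : 0 < l) => ?_
    have hrev : p * (a / p / l) - a / (a / p / l) = -(p * l - a / l) := by
      field_simp; ring
    simp only [F, hrev, heven]
    field_simp
  have hFInt : IntegrableOn F (Ioi 0) := by
    have hweight : ∀ᵐ l ∂volume.restrict (Ioi 0), ‖(p + a / l ^ 2)⁻¹‖ ≤ p⁻¹ :=
      (ae_restrict_iff' measurableSet_Ioi).2 (ae_of_all _ fun l _ => by
        rw [norm_inv, norm_of_nonneg (by positivity)]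
        exact inv_anti₀ hp (le_add_of_nonneg_right (by positivity)))
    have hbdd : IntegrableOn (fun l => (p + a / l ^ 2)⁻¹ * ((p + a / l ^ 2) * F l)) (Ioi 0) :=
      hjacInt.bdd_mul
        (by fun_prop : Measurable fun l : ℝ => (p + a / l ^ 2)⁻¹).aestronglyMeasurable hweight
    refine hbdd.congr_fun (fun l (hl : 0 < l) => ?_) measurableSet_Ioi
    dsimp only
    rw [← mul_assoc, inv_mul_cancel₀ (by positivity), one_mul]
  have hsplit := integral_sub hjacInt (hFInt.const_mul p)
  rw [← hjac, integral_const_mul] at hsplit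
  have : ∫ l in Ioi 0, a / l ^ 2 * F l = (∫ u, f u) - p * ∫ l in Ioi 0, F l := by
    rw [← hsplit]; congr 1; ext l; ring
  rw [eq_div_iff (by positivity)]
  linarith

end CauchySchlomilch

theorem integral_exp_neg_sq_add_div_sq {p a : ℝ} (hp : 0 < p) (ha : 0 ≤ a) :
    ∫ l in Ioi 0, exp (-(p ^ 2 * l ^ 2 + a ^ 2 / l ^ 2) / 2)
      = √(2 * π) / (2 * p) * exp (-(p * a)) := by
  have hpt : ∀ l ∈ Ioi (0 : ℝ), exp (-(p ^ 2 * l ^ 2 + a ^ 2 / l ^ 2) / 2)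
      = exp (-(p * a)) * exp (-(1 / 2) * (p * l - a / l) ^ 2) := fun l (hl : 0 < l) => by
    rw [← exp_add]
    congr 1
    field_simp
    ring
  have hgauss : ∫ u, exp (-(1 / 2) * u ^ 2) = √(2 * π) := by
    rw [integral_gaussian]; congr 1; ring
  rw [setIntegral_congr_fun measurableSet_Ioi hpt, integral_const_mul,
    integral_Ioi_comp_mul_sub_div (integrable_exp_neg_mul_sq (by norm_num)) (fun u => by simp)
      hp ha, hgauss]
  ring

theorem stdPdf_eq_gaussianPDFReal : stdPdf = gaussianPDFReal 0 1 := by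
  ext t; simp [stdPdf, gaussianPDFReal]

theorem continuous_stdPdf : Continuous stdPdf := by
  unfold stdPdf; fun_prop

theorem stdPdf_neg (t : ℝ) : stdPdf (-t) = stdPdf t := by
  simp [stdPdf]

theorem integrable_stdPdf : Integrable stdPdf :=
  stdPdf_eq_gaussianPDFReal ▸ integrable_gaussianPDFReal 0 1

theorem stdCdf_eq_cdf (x : ℝ) : stdCdf x = cdf (gaussianReal 0 1) x := by
  rw [cdf_eq_real, measureReal_def, gaussianReal_apply_eq_integral _ one_ne_zero,
    ENNReal.toReal_ofReal (setIntegral_nonneg measurableSet_Iic fun t _ =>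
      gaussianPDFReal_nonneg _ _ t), stdCdf, stdPdf_eq_gaussianPDFReal]

theorem stdCdf_nonneg (x : ℝ) : 0 ≤ stdCdf x := stdCdf_eq_cdf x ▸ cdf_nonneg _ x

theorem stdCdf_le_one (x : ℝ) : stdCdf x ≤ 1 := stdCdf_eq_cdf x ▸ cdf_le_one _ x

theorem tendsto_stdCdf_atTop : Tendsto stdCdf atTop (𝓝 1) := by
  simpa only [← funext stdCdf_eq_cdf] using tendsto_cdf_atTop (gaussianReal 0 1)

theorem tendsto_stdCdf_atBot : Tendsto stdCdf atBot (𝓝 0) := by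
  simpa only [← funext stdCdf_eq_cdf] using tendsto_cdf_atBot (gaussianReal 0 1)

theorem hasDerivAt_stdCdf (x : ℝ) : HasDerivAt stdCdf (stdPdf x) x := by
  have hIic : stdCdf = fun z => stdCdf 0 + ∫ t in (0 : ℝ)..z, stdPdf t := by
    funext z
    rw [← intervalIntegral.integral_Iic_sub_Iic integrable_stdPdf.integrableOn
      integrable_stdPdf.integrableOn, stdCdf, stdCdf]
    ring
  rw [hIic]
  exact (intervalIntegral.integral_hasDerivAt_right (continuous_stdPdf.intervalIntegrable _ _)
    continuous_stdPdf.stronglyMeasurable.stronglyMeasurableAtFilter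
    continuous_stdPdf.continuousAt).const_add _

theorem continuous_stdCdf : Continuous stdCdf :=
  continuous_iff_continuousAt.2 fun x => (hasDerivAt_stdCdf x).continuousAt

theorem stdCdf_zero : stdCdf 0 = 1 / 2 := by
  have htotal : ∫ t, stdPdf t = 1 := by
    rw [stdPdf_eq_gaussianPDFReal, integral_gaussianPDFReal_eq_one 0 one_ne_zero]
  rw [stdCdf, ← neg_zero, ← integral_comp_neg_Ioi]
  simp_rw [stdPdf_neg]
  rw [integral_Ioi_of_even stdPdf_neg, htotal]

noncomputable def rayleighPDF (σ l : ℝ) : ℝ := l / σ ^ 2 * exp (-(l ^ 2) / (2 * σ ^ 2))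

theorem hasDerivAt_neg_exp_neg_sq_div (σ l : ℝ) :
    HasDerivAt (fun l => -exp (-(l ^ 2) / (2 * σ ^ 2))) (rayleighPDF σ l) l := by
  have h := (((hasDerivAt_pow 2 l).fun_neg.div_const (2 * σ ^ 2)).exp).fun_neg
  refine h.congr_deriv ?_
  rw [rayleighPDF]
  push_cast
  ring

theorem integrable_rayleighPDF {σ : ℝ} (hσ : σ ≠ 0) : Integrable (rayleighPDF σ) := by
  refine ((integrable_mul_exp_neg_mul_sq (b := (2 * σ ^ 2)⁻¹) (by positivity)).const_mul
    (σ ^ 2)⁻¹).congr (ae_of_all _ fun l => ?_)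
  simp only [rayleighPDF]
  ring_nf

theorem integrable_exp_neg_sq_div {σ : ℝ} (hσ : σ ≠ 0) :
    Integrable fun l => exp (-(l ^ 2) / (2 * σ ^ 2)) := by
  refine (integrable_exp_neg_mul_sq (b := (2 * σ ^ 2)⁻¹) (by positivity)).congr
    (ae_of_all _ fun l => ?_)
  dsimp only
  congr 1
  ring

theorem tendsto_exp_neg_sq_div_atTop {σ : ℝ} (hσ : σ ≠ 0) :
    Tendsto (fun l => exp (-(l ^ 2) / (2 * σ ^ 2))) atTop (𝓝 0) := by
  refine tendsto_exp_atBot.comp ?_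
  simp_rw [neg_div]
  exact tendsto_neg_atTop_atBot.comp
    ((tendsto_pow_atTop two_ne_zero).atTop_div_const (by positivity))

/-- `V_λ(x, y)`: the Hüsler–Reiss distribution function with parameter `λ` in Gumbel margins is
`exp (-V_λ(x, y))`. -/
noncomputable def huslerReissExponent (l x y : ℝ) : ℝ :=
  stdCdf (l + (y - x) / (2 * l)) * exp (-x) + stdCdf (l + (x - y) / (2 * l)) * exp (-y)

noncomputable def huslerReissExponent' (l x y : ℝ) : ℝ :=
  2 * (√(2 * π))⁻¹ * exp (-((x + y) / 2)) * exp (-(l ^ 2 + (|y - x| / 2) ^ 2 / l ^ 2) / 2)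

theorem huslerReissExponent_comm (l x y : ℝ) :
    huslerReissExponent l x y = huslerReissExponent l y x :=
  add_comm _ _

theorem exp_neg_mul_stdPdf_add_div {l : ℝ} (hl : l ≠ 0) (x y : ℝ) :
    exp (-x) * stdPdf (l + (y - x) / (2 * l))
      = (√(2 * π))⁻¹ * exp (-((x + y) / 2))
        * exp (-(l ^ 2 + (|y - x| / 2) ^ 2 / l ^ 2) / 2) := by
  rw [stdPdf, mul_left_comm, ← exp_add, mul_assoc, ← exp_add, div_pow, sq_abs]
  congr 2
  field_simp
  ring

theorem hasDerivAt_huslerReissExponent (x y : ℝ) {l : ℝ} (hl : l ≠ 0) :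
    HasDerivAt (fun l => huslerReissExponent l x y) (huslerReissExponent' l x y) l := by
  have hinner (c : ℝ) : HasDerivAt (fun l => l + c / (2 * l)) (1 - c / (2 * l ^ 2)) l := by
    have h := hasDerivAt_mul_sub_div (p := 1) (a := -(c / 2)) hl
    simp only [one_mul, neg_div, sub_neg_eq_add, div_div] at h
    convert h using 2
    ring
  have h := (((hasDerivAt_stdCdf _).comp l (hinner (y - x))).mul_const (exp (-x))).fun_add
    (((hasDerivAt_stdCdf _).comp l (hinner (x - y))).mul_const (exp (-y)))
  refine HasDerivAt.congr_deriv (f := fun l => huslerReissExponent l x y) h ?_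
  have hxy := exp_neg_mul_stdPdf_add_div hl x y
  have hyx := exp_neg_mul_stdPdf_add_div hl y x
  rw [abs_sub_comm, add_comm y] at hyx
  rw [huslerReissExponent']
  linear_combination (1 - (y - x) / (2 * l ^ 2)) * hxy + (1 - (x - y) / (2 * l ^ 2)) * hyx

theorem tendsto_huslerReissExponent_atTop (x y : ℝ) :
    Tendsto (fun l => huslerReissExponent l x y) atTop (𝓝 (exp (-x) + exp (-y))) := by
  have harg (c : ℝ) : Tendsto (fun l => l + c / (2 * l)) atTop atTop := by
    have h := tendsto_inv_atTop_zero.const_mul (c / 2)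
    rw [mul_zero] at h
    exact tendsto_id.atTop_add (h.congr fun l => by ring)
  have h := ((tendsto_stdCdf_atTop.comp (harg (y - x))).mul_const (exp (-x))).add
    ((tendsto_stdCdf_atTop.comp (harg (x - y))).mul_const (exp (-y)))
  rwa [one_mul, one_mul] at h

theorem tendsto_huslerReissExponent_nhdsGT_zero (x y : ℝ) :
    Tendsto (fun l => huslerReissExponent l x y) (𝓝[>] 0) (𝓝 (exp (-min x y))) := by
  wlog hxy : x ≤ y generalizing x y
  · simpa only [huslerReissExponent_comm, min_comm] using this y x (le_of_not_ge hxy)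
  rw [min_eq_left hxy]
  rcases hxy.eq_or_lt with rfl | hxy
  · have h := ((continuous_stdCdf.tendsto 0).mono_left
      (nhdsWithin_le_nhds (s := Ioi 0))).mul_const (exp (-x))
    have h2 := h.add h
    rw [stdCdf_zero, ← add_mul, add_halves, one_mul] at h2
    exact h2.congr fun l => by simp [huslerReissExponent]
  have hid : Tendsto (fun l : ℝ => l) (𝓝[>] 0) (𝓝 0) := tendsto_id.mono_left nhdsWithin_le_nhds
  have hpos : Tendsto (fun l => l + (y - x) / (2 * l)) (𝓝[>] 0) atTop :=
    (hid.add_atTop (tendsto_inv_nhdsGT_zero.const_mul_atTop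
      (by linarith : 0 < (y - x) / 2))).congr fun l => by ring
  have hneg : Tendsto (fun l => l + (x - y) / (2 * l)) (𝓝[>] 0) atBot :=
    (hid.add_atBot (tendsto_inv_nhdsGT_zero.const_mul_atTop_of_neg
      (by linarith : (x - y) / 2 < 0))).congr fun l => by ring
  have h := ((tendsto_stdCdf_atTop.comp hpos).mul_const (exp (-x))).add
    ((tendsto_stdCdf_atBot.comp hneg).mul_const (exp (-y)))
  rwa [one_mul, zero_mul, add_zero] at h

theorem abs_huslerReissExponent_le (l x y : ℝ) :
    |huslerReissExponent l x y| ≤ exp (-x) + exp (-y) := by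
  have h1 := stdCdf_nonneg (l + (y - x) / (2 * l))
  have h2 := stdCdf_nonneg (l + (x - y) / (2 * l))
  have h3 := stdCdf_le_one (l + (y - x) / (2 * l))
  have h4 := stdCdf_le_one (l + (x - y) / (2 * l))
  rw [abs_of_nonneg (by unfold huslerReissExponent; positivity), huslerReissExponent]
  gcongr <;> nlinarith [exp_pos (-x), exp_pos (-y)]

theorem abs_huslerReissExponent'_le (l x y : ℝ) :
    |huslerReissExponent' l x y| ≤ 2 * (√(2 * π))⁻¹ * exp (-((x + y) / 2)) := by
  rw [abs_of_nonneg (by unfold huslerReissExponent'; positivity), huslerReissExponent']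
  refine mul_le_of_le_one_right (by positivity) (exp_le_one_iff.2 ?_)
  have : 0 ≤ l ^ 2 + (|y - x| / 2) ^ 2 / l ^ 2 := by positivity
  linarith

theorem measurable_huslerReissExponent (x y : ℝ) :
    Measurable fun l => huslerReissExponent l x y :=
  ((continuous_stdCdf.measurable.comp (by fun_prop)).mul_const _).add
    ((continuous_stdCdf.measurable.comp (by fun_prop)).mul_const _)

theorem integral_huslerReissExponent_mul_rayleighPDF {σ : ℝ} (hσ : σ ≠ 0) (x y : ℝ) :
    ∫ l in Ioi 0, huslerReissExponent l x y * rayleighPDF σ l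
      = exp (-min x y)
        + ∫ l in Ioi 0, huslerReissExponent' l x y * exp (-(l ^ 2) / (2 * σ ^ 2)) := by
  set E := fun l : ℝ => exp (-(l ^ 2) / (2 * σ ^ 2))
  have hint : IntegrableOn (fun l => huslerReissExponent l x y * rayleighPDF σ l) (Ioi 0) :=
    ((integrable_rayleighPDF hσ).bdd_mul
      (measurable_huslerReissExponent x y).aestronglyMeasurable
      (ae_of_all _ fun l => abs_huslerReissExponent_le l x y)).integrableOn
  have hint' : IntegrableOn (fun l => huslerReissExponent' l x y * -E l) (Ioi 0) :=
    ((integrable_exp_neg_sq_div hσ).neg.bdd_mul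
      (by unfold huslerReissExponent'; fun_prop :
        Measurable fun l => huslerReissExponent' l x y).aestronglyMeasurable
      (ae_of_all _ fun l => abs_huslerReissExponent'_le l x y)).integrableOn
  have hE0 : Tendsto (fun l => -E l) (𝓝[>] 0) (𝓝 (-1)) := by
    have hcont : Continuous fun l => -E l := by fun_prop
    simpa [E] using (hcont.tendsto 0).mono_left nhdsWithin_le_nhds
  have hibp := integral_Ioi_mul_deriv_eq_deriv_mul
    (u := fun l => huslerReissExponent l x y) (v := fun l => -E l)
    (fun l hl => hasDerivAt_huslerReissExponent x y (ne_of_gt hl))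
    (fun l _ => hasDerivAt_neg_exp_neg_sq_div σ l) hint hint'
    ((tendsto_huslerReissExponent_nhdsGT_zero x y).mul hE0)
    ((tendsto_huslerReissExponent_atTop x y).mul (tendsto_exp_neg_sq_div_atTop hσ).neg)
  simp only [mul_neg, integral_neg, mul_one, neg_zero, mul_zero] at hibp
  rw [hibp]
  ring

theorem integral_huslerReissExponent'_mul_exp {σ : ℝ} (hσ : σ ≠ 0) (x y : ℝ) :
    ∫ l in Ioi 0, huslerReissExponent' l x y * exp (-(l ^ 2) / (2 * σ ^ 2))
      = (√(1 + 1 / σ ^ 2))⁻¹ * exp (-((x + y) / 2))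
        * exp (-(|y - x| * √(1 + 1 / σ ^ 2) / 2)) := by
  set η := √(1 + 1 / σ ^ 2)
  have hη : 0 < η := sqrt_pos.2 (by positivity)
  have hη2 : η ^ 2 = 1 + 1 / σ ^ 2 := sq_sqrt (by positivity)
  have hpt : ∀ l ∈ Ioi (0 : ℝ), huslerReissExponent' l x y * exp (-(l ^ 2) / (2 * σ ^ 2))
      = 2 * (√(2 * π))⁻¹ * exp (-((x + y) / 2))
        * exp (-(η ^ 2 * l ^ 2 + (|y - x| / 2) ^ 2 / l ^ 2) / 2) := fun l (hl : 0 < l) => by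
    rw [huslerReissExponent', mul_assoc _ (exp _), ← exp_add, hη2]
    congr 2
    field_simp
    ring
  rw [setIntegral_congr_fun measurableSet_Ioi hpt, integral_const_mul,
    integral_exp_neg_sq_add_div_sq hη (by positivity)]
  field_simp

/-- **Rayleigh mixture of Hüsler–Reiss distributions.** -/
theorem stmt8 (σ : ℝ) (hσ : 0 < σ) (x y : ℝ) :
    ∫ l in Set.Ioi (0 : ℝ),
        (stdCdf (l + (y - x) / (2 * l)) * Real.exp (-x)
          + stdCdf (l + (x - y) / (2 * l)) * Real.exp (-y))
          * (l / σ ^ 2 * Real.exp (-(l ^ 2) / (2 * σ ^ 2)))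
      = Real.exp (-(min x y))
        + (Real.sqrt (1 + 1 / σ ^ 2))⁻¹ * Real.exp (-((x + y) / 2))
          * Real.exp (-(|y - x| * Real.sqrt (1 + 1 / σ ^ 2) / 2)) := by
  rw [← integral_huslerReissExponent'_mul_exp hσ.ne']
  exact integral_huslerReissExponent_mul_rayleighPDF hσ.ne' x y
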